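/- arXiv:1401.3495 — 2 statements merged into one kernel-verified Lean document; each statement's English description precedes it below -/
import Mathlib

section
/- Let Y_1,...,Y_n be independent with Y_i ~ Bernoulli(z_i), and let S := f(Y) − f(z) for a C² function f: [0,1]^n → ℝ with ‖f‖_∞ ≤ a, ‖∂f/∂x_i‖_∞ ≤ b_i, ‖∂²f/∂x_i²‖_∞ ≤ c_{ii}. Then E[S²] ≤ ∑_{i=1}^n (a c_{ii} + b_i²). -/
/-!
Sample the coordinates of `Y` one at a time. Sampling coordinate `j`, with the other coordinates
held fixed, raises `E (f(·) - f z)²` by at most `a cⱼ + bⱼ²`: along the line through the current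
point in direction `eⱼ`, with `u t = f(·) - f z` and `p = zⱼ`,

  `p u(1)² + (1-p) u(0)² - u(p)²`
  `  = p (u(1) - u(p))² + (1-p) (u(0) - u(p))² + 2 u(p) (p (u(1) - u(p)) + (1-p) (u(0) - u(p)))`.

The mean value theorem bounds the first two terms by `bⱼ² p(1-p)`; in the last one the
first-order Taylor terms cancel, leaving at most `2 · 2a · cⱼ p(1-p)`, and `p(1-p) ≤ 1/4`.
-/

open Set Function

lemma abs_sub_le_of_abs_hasDerivAt_le {u u' : ℝ → ℝ} {s : Set ℝ} {B x y : ℝ} (hs : Convex ℝ s)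
    (hu : ∀ t ∈ s, HasDerivAt u (u' t) t) (hB : ∀ t ∈ s, |u' t| ≤ B) (hx : x ∈ s) (hy : y ∈ s) :
    |u y - u x| ≤ B * |y - x| := by
  simpa only [Real.norm_eq_abs] using hs.norm_image_sub_le_of_norm_hasDerivWithin_le
    (fun t ht => (hu t ht).hasDerivWithinAt) hB hx hy

lemma abs_sub_sub_mul_le_of_hasDerivAt {u u' u'' : ℝ → ℝ} {C p x : ℝ}
    (hu : ∀ t, HasDerivAt u (u' t) t) (hu' : ∀ t, HasDerivAt u' (u'' t) t)
    (hC : ∀ t ∈ uIcc p x, |u'' t| ≤ C) :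
    |u x - u p - (x - p) * u' p| ≤ C * (x - p) ^ 2 := by
  have hC0 : 0 ≤ C := (abs_nonneg _).trans (hC p left_mem_uIcc)
  have hlip (t : ℝ) (ht : t ∈ uIcc p x) : |u' t - u' p| ≤ C * |x - p| :=
    calc |u' t - u' p| ≤ C * |t - p| :=
          abs_sub_le_of_abs_hasDerivAt_le (convex_uIcc p x) (fun t _ => hu' t) hC left_mem_uIcc ht
      _ ≤ C * |x - p| := mul_le_mul_of_nonneg_left (abs_sub_left_of_mem_uIcc ht) hC0
  have hw (t : ℝ) : HasDerivAt (fun t => u t - t * u' p) (u' t - u' p) t := by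
    have h := (hu t).sub ((hasDerivAt_id' t).mul_const (u' p))
    rwa [one_mul] at h
  calc |u x - u p - (x - p) * u' p| = |(u x - x * u' p) - (u p - p * u' p)| := by ring_nf
    _ ≤ C * |x - p| * |x - p| :=
        abs_sub_le_of_abs_hasDerivAt_le (convex_uIcc p x) (fun t _ => hw t) hlip left_mem_uIcc
          right_mem_uIcc
    _ = C * (x - p) ^ 2 := by rw [mul_assoc, ← abs_mul, ← sq, abs_sq]

lemma bernoulli_mean_sq_le {u u' u'' : ℝ → ℝ} {B C p : ℝ}
    (hu : ∀ t, HasDerivAt u (u' t) t) (hu' : ∀ t, HasDerivAt u' (u'' t) t)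
    (hB : ∀ t ∈ Icc (0 : ℝ) 1, |u' t| ≤ B) (hC : ∀ t ∈ Icc (0 : ℝ) 1, |u'' t| ≤ C)
    (hp : p ∈ Icc (0 : ℝ) 1) :
    p * u 1 ^ 2 + (1 - p) * u 0 ^ 2 ≤ u p ^ 2 + p * (1 - p) * (B ^ 2 + 2 * |u p| * C) := by
  have hp0 : 0 ≤ p := hp.1
  have hq : 0 ≤ 1 - p := sub_nonneg.2 hp.2
  have h0 : (0 : ℝ) ∈ Icc (0 : ℝ) 1 := left_mem_Icc.2 zero_le_one
  have h1 : (1 : ℝ) ∈ Icc (0 : ℝ) 1 := right_mem_Icc.2 zero_le_one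
  have lip1 : |u 1 - u p| ≤ B * (1 - p) := by
    simpa [abs_of_nonneg hq] using
      abs_sub_le_of_abs_hasDerivAt_le (convex_Icc 0 1) (fun t _ => hu t) hB hp h1
  have lip0 : |u 0 - u p| ≤ B * p := by
    simpa [abs_of_nonneg hp0] using
      abs_sub_le_of_abs_hasDerivAt_le (convex_Icc 0 1) (fun t _ => hu t) hB hp h0
  have tay1 : |u 1 - u p - (1 - p) * u' p| ≤ C * (1 - p) ^ 2 :=
    abs_sub_sub_mul_le_of_hasDerivAt hu hu' fun t ht => hC t (uIcc_subset_Icc hp h1 ht)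
  have tay0 : |u 0 - u p - (0 - p) * u' p| ≤ C * (0 - p) ^ 2 :=
    abs_sub_sub_mul_le_of_hasDerivAt hu hu' fun t ht => hC t (uIcc_subset_Icc hp h0 ht)
  have hvar : p * (u 1 - u p) ^ 2 + (1 - p) * (u 0 - u p) ^ 2 ≤ p * (1 - p) * B ^ 2 :=
    calc p * (u 1 - u p) ^ 2 + (1 - p) * (u 0 - u p) ^ 2
        ≤ p * (B * (1 - p)) ^ 2 + (1 - p) * (B * p) ^ 2 := by
          rw [← sq_abs (u 1 - u p), ← sq_abs (u 0 - u p)]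
          gcongr
      _ = p * (1 - p) * B ^ 2 := by ring
  have hmean : |p * (u 1 - u p) + (1 - p) * (u 0 - u p)| ≤ p * (1 - p) * C :=
    calc |p * (u 1 - u p) + (1 - p) * (u 0 - u p)|
        = |p * (u 1 - u p - (1 - p) * u' p) + (1 - p) * (u 0 - u p - (0 - p) * u' p)| := by
          ring_nf
      _ ≤ p * (C * (1 - p) ^ 2) + (1 - p) * (C * (0 - p) ^ 2) := by
          refine (abs_add_le _ _).trans ?_
          rw [abs_mul, abs_mul, abs_of_nonneg hp0, abs_of_nonneg hq]
          gcongr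
      _ = p * (1 - p) * C := by ring
  have hcross : u p * (p * (u 1 - u p) + (1 - p) * (u 0 - u p)) ≤ |u p| * (p * (1 - p) * C) :=
    (le_abs_self _).trans ((abs_mul _ _).trans_le
      (mul_le_mul_of_nonneg_left hmean (abs_nonneg _)))
  linarith

lemma update_mem_Icc {ι : Type*} [DecidableEq ι] {α : ι → Type*} [∀ i, Preorder (α i)]
    {a b x : ∀ i, α i} (hx : x ∈ Icc a b) (j : ι) {t : α j} (ht : t ∈ Icc (a j) (b j)) :
    update x j t ∈ Icc a b :=
  ⟨le_update_iff.2 ⟨ht.1, fun i _ => hx.1 i⟩, update_le_iff.2 ⟨ht.2, fun i _ => hx.2 i⟩⟩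

section Coordinate

variable {ι : Type*} [Fintype ι] [DecidableEq ι]

lemma bernoulli_update_sq_le {f : (ι → ℝ) → ℝ} (hf : ContDiff ℝ 2 f) {a b c y p : ℝ} {j : ι}
    (ha : ∀ x ∈ Icc (0 : ι → ℝ) 1, |f x| ≤ a)
    (hb : ∀ x ∈ Icc (0 : ι → ℝ) 1, |fderiv ℝ f x (Pi.single j 1)| ≤ b)
    (hc : ∀ x ∈ Icc (0 : ι → ℝ) 1,
      |fderiv ℝ (fun w => fderiv ℝ f w (Pi.single j 1)) x (Pi.single j 1)| ≤ c)
    (hy : |y| ≤ a) {x : ι → ℝ} (hx : x ∈ Icc (0 : ι → ℝ) 1) (hp : p ∈ Icc (0 : ℝ) 1) :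
    p * (f (update x j 1) - y) ^ 2 + (1 - p) * (f (update x j 0) - y) ^ 2
      ≤ (f (update x j p) - y) ^ 2 + (a * c + b ^ 2) := by
  set g : (ι → ℝ) → ℝ := fun w => fderiv ℝ f w (Pi.single j 1)
  have hg : ContDiff ℝ 1 g := (hf.fderiv_right le_rfl).clm_apply contDiff_const
  have hu (t : ℝ) : HasDerivAt (fun t => f (update x j t) - y) (g (update x j t)) t :=
    ((hf.differentiable two_ne_zero _).hasFDerivAt.comp_hasDerivAt t
      (hasDerivAt_update x j t)).sub_const y
  have hu' (t : ℝ) : HasDerivAt (fun t => g (update x j t))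
      (fderiv ℝ g (update x j t) (Pi.single j 1)) t :=
    (hg.differentiable one_ne_zero _).hasFDerivAt.comp_hasDerivAt t (hasDerivAt_update x j t)
  have key := bernoulli_mean_sq_le hu hu' (fun t ht => hb _ (update_mem_Icc hx j ht))
    (fun t ht => hc _ (update_mem_Icc hx j ht)) hp
  have hup : |f (update x j p) - y| ≤ 2 * a := by
    linarith [abs_sub (f (update x j p)) y, ha _ (update_mem_Icc hx j hp)]
  have hc0 : 0 ≤ c := (abs_nonneg _).trans (hc x hx)
  have hpq : p * (1 - p) ≤ 1 / 4 := by nlinarith [sq_nonneg (1 - 2 * p)]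
  have hrem : p * (1 - p) * (b ^ 2 + 2 * |f (update x j p) - y| * c)
      ≤ 1 / 4 * (b ^ 2 + 2 * (2 * a) * c) := by
    gcongr
  linarith [sq_nonneg b]

end Coordinate

def cubeVertex {ι : Type*} (w : ι → Bool) : ι → ℝ := fun i => if w i then 1 else 0

lemma cubeVertex_mem_Icc {ι : Type*} (w : ι → Bool) : cubeVertex w ∈ Icc (0 : ι → ℝ) 1 :=
  ⟨fun i => by unfold cubeVertex; split <;> norm_num,
    fun i => by unfold cubeVertex; split <;> norm_num⟩

section BernoulliWeight

variable {ι : Type*} [Fintype ι]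

/-- The probability that independent `Yᵢ ~ Bernoulli(p i)` take the values `w`. -/
def bernoulliWeight (p : ι → ℝ) (w : ι → Bool) : ℝ :=
  ∏ i, if w i then p i else 1 - p i

variable {p : ι → ℝ}

lemma bernoulliWeight_nonneg (hp : ∀ i, p i ∈ Icc (0 : ℝ) 1) (w : ι → Bool) :
    0 ≤ bernoulliWeight p w :=
  Finset.prod_nonneg fun i _ => by split <;> linarith [(hp i).1, (hp i).2]

variable [DecidableEq ι]

lemma sum_bernoulliWeight : ∑ w, bernoulliWeight p w = 1 := by
  simpa [bernoulliWeight] using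
    (Fintype.prod_sum fun i (b : Bool) => if b then p i else 1 - p i).symm

lemma sum_bernoulliWeight_mul_eq_resample (i : ι) (φ : (ι → Bool) → ℝ) :
    ∑ w, bernoulliWeight p w * φ w =
      ∑ w, bernoulliWeight p w *
        (p i * φ (update w i true) + (1 - p i) * φ (update w i false)) := by
  let e := (Equiv.funSplitAt i Bool).symm
  have hweight (b : Bool) (v : {j // j ≠ i} → Bool) : bernoulliWeight p (e (b, v)) =
      (if b then p i else 1 - p i) * ∏ j : {j // j ≠ i}, if v j then p j else 1 - p j := by
    rw [bernoulliWeight, Fintype.prod_eq_mul_prod_subtype_ne _ i]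
    simp [e, fun j : {j // j ≠ i} => j.property]
  have hupdate (b b' : Bool) (v : {j // j ≠ i} → Bool) : update (e (b, v)) i b' = e (b', v) := by
    funext j
    by_cases h : j = i
    · subst h; simp [e]
    · simp [e, h]
  simp only [← e.sum_comp, Fintype.sum_prod_type, Fintype.sum_bool, hweight, hupdate, if_true,
    Bool.false_eq_true, if_false, ← Finset.sum_add_distrib]
  refine Finset.sum_congr rfl fun v _ => ?_
  ring

end BernoulliWeight

section Tensorization

variable {ι : Type*} [Fintype ι] [DecidableEq ι] {z : ι → ℝ} {h : (ι → ℝ) → ℝ} {C : ι → ℝ}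

lemma sum_bernoulliWeight_mul_piecewise_insert_le (hz : ∀ i, z i ∈ Icc (0 : ℝ) 1)
    (hstep : ∀ j, ∀ x ∈ Icc (0 : ι → ℝ) 1,
      z j * h (update x j 1) + (1 - z j) * h (update x j 0) ≤ h (update x j (z j)) + C j)
    {s : Finset ι} {j : ι} (hj : j ∉ s) :
    ∑ w, bernoulliWeight z w * h ((insert j s).piecewise (cubeVertex w) z)
      ≤ ∑ w, bernoulliWeight z w * h (s.piecewise (cubeVertex w) z) + C j := by
  set x : (ι → Bool) → ι → ℝ := fun w => s.piecewise (cubeVertex w) z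
  have hx_mem (w : ι → Bool) : x w ∈ Icc (0 : ι → ℝ) 1 :=
    Finset.piecewise_mem_Icc_of_mem_of_mem _ (cubeVertex_mem_Icc w)
      ⟨fun i => (hz i).1, fun i => (hz i).2⟩
  have hx_update (w : ι → Bool) (b : Bool) : x (update w j b) = x w :=
    s.piecewise_congr (fun i hi => by simp [cubeVertex, ne_of_mem_of_not_mem hi hj])
      fun _ _ => rfl
  have hx_self (w : ι → Bool) : update (x w) j (z j) = x w := by
    rw [update_eq_self_iff]; exact (Finset.piecewise_eq_of_notMem _ _ _ hj).symm
  calc ∑ w, bernoulliWeight z w * h ((insert j s).piecewise (cubeVertex w) z)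
      = ∑ w, bernoulliWeight z w * h (update (x w) j (cubeVertex w j)) := by
        simp only [Finset.piecewise_insert, x]
    _ = ∑ w, bernoulliWeight z w *
          (z j * h (update (x w) j 1) + (1 - z j) * h (update (x w) j 0)) := by
        rw [sum_bernoulliWeight_mul_eq_resample j]
        simp [hx_update, cubeVertex]
    _ ≤ ∑ w, bernoulliWeight z w * (h (x w) + C j) :=
        Finset.sum_le_sum fun w _ => mul_le_mul_of_nonneg_left
          (by simpa only [hx_self] using hstep j (x w) (hx_mem w)) (bernoulliWeight_nonneg hz w)
    _ = ∑ w, bernoulliWeight z w * h (x w) + C j := by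
        simp [mul_add, Finset.sum_add_distrib, ← Finset.sum_mul, sum_bernoulliWeight]

lemma sum_bernoulliWeight_mul_le_add_sum (hz : ∀ i, z i ∈ Icc (0 : ℝ) 1)
    (hstep : ∀ j, ∀ x ∈ Icc (0 : ι → ℝ) 1,
      z j * h (update x j 1) + (1 - z j) * h (update x j 0) ≤ h (update x j (z j)) + C j) :
    ∑ w, bernoulliWeight z w * h (cubeVertex w) ≤ h z + ∑ j, C j := by
  suffices ∀ s : Finset ι,
      ∑ w, bernoulliWeight z w * h (s.piecewise (cubeVertex w) z) ≤ h z + ∑ j ∈ s, C j by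
    simpa using this Finset.univ
  intro s
  induction s using Finset.induction_on with
  | empty => simp [← Finset.sum_mul, sum_bernoulliWeight]
  | insert j s hj ih =>
    rw [Finset.sum_insert hj]
    linarith [sum_bernoulliWeight_mul_piecewise_insert_le hz hstep hj]

end Tensorization

theorem stmt_9 (n : ℕ) (f : (Fin n → ℝ) → ℝ) (hf : ContDiff ℝ 2 f)
    (z : Fin n → ℝ) (hz : ∀ i, z i ∈ Set.Icc (0:ℝ) 1)
    (a : ℝ) (b c : Fin n → ℝ)
    (ha : ∀ x ∈ Set.Icc (0 : Fin n → ℝ) 1, |f x| ≤ a)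
    (hb : ∀ i, ∀ x ∈ Set.Icc (0 : Fin n → ℝ) 1, |fderiv ℝ f x (Pi.single i 1)| ≤ b i)
    (hc : ∀ i, ∀ x ∈ Set.Icc (0 : Fin n → ℝ) 1,
      |fderiv ℝ (fun w => fderiv ℝ f w (Pi.single i 1)) x (Pi.single i 1)| ≤ c i) :
    ∑ x : Fin n → Bool,
        (∏ i, (if x i then z i else 1 - z i)) *
          (f (fun i => if x i then 1 else 0) - f z) ^ 2
      ≤ ∑ i, (a * c i + b i ^ 2) := by
  have hfz : |f z| ≤ a := ha z ⟨fun i => (hz i).1, fun i => (hz i).2⟩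
  have hstep (j : Fin n) (x : Fin n → ℝ) (hx : x ∈ Set.Icc (0 : Fin n → ℝ) 1) :=
    bernoulli_update_sq_le hf ha (hb j) (hc j) hfz hx (hz j)
  have key := sum_bernoulliWeight_mul_le_add_sum (h := fun x => (f x - f z) ^ 2) hz hstep
  rw [sub_self, zero_pow two_ne_zero, zero_add] at key
  exact key
end

section
/- For the function f(x) := (1/n) ∑_{i,j ∈ ℤ/nℤ} x_i x_{i+j} x_{i+2j} on [0,1]^{ℤ/nℤ}, define φ_p(t) := inf{ I_p(x) : x ∈ [0,1]^{ℤ/nℤ}, f(x) ≥ tn }. Then for any 0 < δ < t < 1, φ_p(t−δ) ≥ φ_p(t) − (δ/(1−t))^{1/3} · n log(1/p). -/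
/-! Take `x` feasible at level `t - δ` and push every coordinate toward `1`, setting
`y = x + ε (1 - x)` with `ε = min ((δ / (1 - t)) ^ (1/3)) 1`: then `y` stays in the cube and
`ε³ (1 - t + δ) ≥ δ`. Termwise `∏ (a_i + ε (1 - a_i)) ≥ (1 - ε³) ∏ a_i + ε³`, so
`f y ≥ (1 - ε³) f x + ε³ n ≥ t n`. The Bernoulli relative entropy is nonnegative, convex in
its first argument and equal to `log (1 / p)` at `1`, so each coordinate of `I_p` grows by at
most `ε log (1 / p)`. -/

open Real Set InformationTheory

noncomputable def bernoulliKL (p a : ℝ) : ℝ :=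
  a * log (a / p) + (1 - a) * log ((1 - a) / (1 - p))

def threeAPSum {R : Type*} [Semiring R] [Fintype R] (x : R → ℝ) : ℝ :=
  ∑ i, ∑ j, x i * x (i + j) * x (i + 2 * j)

lemma lerp_mem_Icc {a ε : ℝ} (ha : a ∈ Icc 0 1) (hε : ε ∈ Icc 0 1) :
    a + ε * (1 - a) ∈ Icc 0 1 :=
  ⟨by nlinarith [ha.1, ha.2, hε.1], by nlinarith [ha.2, hε.2]⟩

section bernoulliKL

variable {p : ℝ}

lemma bernoulliKL_eq_klFun (hp : p ∈ Ioo 0 1) (a : ℝ) :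
    bernoulliKL p a = p * klFun (a / p) + (1 - p) * klFun ((1 - a) / (1 - p)) := by
  have hp1 : 1 - p ≠ 0 := by linarith [hp.2]
  simp only [bernoulliKL, klFun]
  field_simp [hp.1.ne']
  ring

lemma bernoulliKL_nonneg (hp : p ∈ Ioo 0 1) {a : ℝ} (ha : a ∈ Icc 0 1) :
    0 ≤ bernoulliKL p a := by
  have hq : 0 < 1 - p := sub_pos.2 hp.2
  have h₁ := klFun_nonneg (div_nonneg ha.1 hp.1.le)
  have h₂ := klFun_nonneg (div_nonneg (sub_nonneg.2 ha.2) hq.le)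
  have hp0 : 0 ≤ p := hp.1.le
  rw [bernoulliKL_eq_klFun hp]
  positivity

lemma bernoulliKL_one (p : ℝ) : bernoulliKL p 1 = log (1 / p) := by
  simp [bernoulliKL]

lemma convexOn_bernoulliKL (hp : p ∈ Ioo 0 1) : ConvexOn ℝ (Icc 0 1) (bernoulliKL p) := by
  have hq : 0 < 1 - p := sub_pos.2 hp.2
  refine ⟨convex_Icc 0 1, fun a ha b hb μ ν hμ hν hμν => ?_⟩
  have h₁ := convexOn_klFun.2 (mem_Ici.2 (div_nonneg ha.1 hp.1.le))
    (mem_Ici.2 (div_nonneg hb.1 hp.1.le)) hμ hν hμν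
  have h₂ := convexOn_klFun.2 (mem_Ici.2 (div_nonneg (sub_nonneg.2 ha.2) hq.le))
    (mem_Ici.2 (div_nonneg (sub_nonneg.2 hb.2) hq.le)) hμ hν hμν
  have e₁ : μ • (a / p) + ν • (b / p) = (μ • a + ν • b) / p := by
    simp only [smul_eq_mul]; ring
  have e₂ : μ • ((1 - a) / (1 - p)) + ν • ((1 - b) / (1 - p))
      = (1 - (μ • a + ν • b)) / (1 - p) := by
    simp only [smul_eq_mul]
    field_simp
    linear_combination hμν
  rw [e₁] at h₁
  rw [e₂] at h₂
  simp only [bernoulliKL_eq_klFun hp, smul_eq_mul] at h₁ h₂ ⊢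
  have hp0 : 0 ≤ p := hp.1.le
  linear_combination p * h₁ + (1 - p) * h₂

lemma bernoulliKL_lerp_le (hp : p ∈ Ioo 0 1) {a ε : ℝ} (ha : a ∈ Icc 0 1)
    (hε : ε ∈ Icc 0 1) :
    bernoulliKL p (a + ε * (1 - a)) ≤ bernoulliKL p a + ε * log (1 / p) := by
  have h := (convexOn_bernoulliKL hp).2 ha (right_mem_Icc.2 zero_le_one)
    (sub_nonneg.2 hε.2) hε.1 (by ring)
  simp only [smul_eq_mul, bernoulliKL_one] at h
  have h₀ := mul_nonneg hε.1 (bernoulliKL_nonneg hp ha)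
  calc bernoulliKL p (a + ε * (1 - a))
      = bernoulliKL p ((1 - ε) * a + ε * 1) := by ring_nf
    _ ≤ (1 - ε) * bernoulliKL p a + ε * log (1 / p) := h
    _ ≤ bernoulliKL p a + ε * log (1 / p) := by linarith

lemma sum_bernoulliKL_lerp_le (hp : p ∈ Ioo 0 1) {ι : Type*} [Fintype ι] {x : ι → ℝ}
    (hx : ∀ i, x i ∈ Icc 0 1) {ε : ℝ} (hε : ε ∈ Icc 0 1) :
    ∑ i, bernoulliKL p (x i + ε * (1 - x i))
      ≤ ∑ i, bernoulliKL p (x i) + ε * Fintype.card ι * log (1 / p) := by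
  calc ∑ i, bernoulliKL p (x i + ε * (1 - x i))
      ≤ ∑ i, (bernoulliKL p (x i) + ε * log (1 / p)) :=
        Finset.sum_le_sum fun i _ => bernoulliKL_lerp_le hp (hx i) hε
    _ = _ := by
        rw [Finset.sum_add_distrib, Finset.sum_const, Finset.card_univ, nsmul_eq_mul]
        ring

end bernoulliKL

lemma one_sub_pow_three_mul_add_le_lerp_mul {a b c ε : ℝ} (ha : a ∈ Icc 0 1)
    (hb : b ∈ Icc 0 1) (hc : c ∈ Icc 0 1) (hε : ε ∈ Icc 0 1) :
    (1 - ε ^ 3) * (a * b * c) + ε ^ 3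
      ≤ (a + ε * (1 - a)) * (b + ε * (1 - b)) * (c + ε * (1 - c)) := by
  obtain ⟨ha0, ha1⟩ := ha
  obtain ⟨hb0, hb1⟩ := hb
  obtain ⟨hc0, hc1⟩ := hc
  obtain ⟨hε0, hε1⟩ := hε
  have hbc : b * c ≤ 1 := mul_le_one₀ hb1 hc0 hc1
  have hca : c * a ≤ 1 := mul_le_one₀ hc1 ha0 ha1
  have hab : a * b ≤ 1 := mul_le_one₀ ha1 hb0 hb1
  have key : (a + ε * (1 - a)) * (b + ε * (1 - b)) * (c + ε * (1 - c))
      - ((1 - ε ^ 3) * (a * b * c) + ε ^ 3)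
      = ε * (1 - ε) ^ 2 * (a * b * (1 - c) + b * c * (1 - a) + c * a * (1 - b))
        + ε ^ 2 * (1 - ε) * (a * (1 - b * c) + b * (1 - c * a) + c * (1 - a * b)) := by
    ring
  rw [← sub_nonneg, key]
  have := sub_nonneg.2 hε1
  have := sub_nonneg.2 ha1
  have := sub_nonneg.2 hb1
  have := sub_nonneg.2 hc1
  have := sub_nonneg.2 hbc
  have := sub_nonneg.2 hca
  have := sub_nonneg.2 hab
  positivity

lemma le_min_pow_three_mul {ε t δ : ℝ} (ht : t < 1) (hε : ε ^ 3 = δ / (1 - t)) :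
    δ ≤ min ε 1 ^ 3 * (1 - t + δ) := by
  rcases min_cases ε 1 with ⟨h, -⟩ | ⟨h, -⟩ <;> rw [h]
  · rw [hε, div_mul_eq_mul_div, le_div_iff₀ (sub_pos.2 ht)]
    nlinarith [sq_nonneg δ]
  · linarith

lemma sInf_image_le_sInf_image_add {α : Type*} {g : α → ℝ} {A B : Set α} {c : ℝ}
    (hA : A.Nonempty) (hB : BddBelow (g '' B)) (h : ∀ x ∈ A, ∃ y ∈ B, g y ≤ g x + c) :
    sInf (g '' B) ≤ sInf (g '' A) + c := by
  rw [← sub_le_iff_le_add]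
  refine le_csInf (hA.image g) ?_
  rintro _ ⟨x, hx, rfl⟩
  obtain ⟨y, hy, hxy⟩ := h x hx
  linarith [csInf_le hB (mem_image_of_mem g hy)]

section threeAPSum

variable {R : Type*} [Semiring R] [Fintype R]

lemma threeAPSum_one : threeAPSum (fun _ : R => (1 : ℝ)) = Fintype.card R ^ 2 := by
  simp only [threeAPSum, mul_one, Finset.sum_const, Finset.card_univ, nsmul_eq_mul]
  ring

lemma threeAPSum_lerp_ge {x : R → ℝ} (hx : ∀ i, x i ∈ Icc 0 1) {ε : ℝ}
    (hε : ε ∈ Icc 0 1) :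
    (1 - ε ^ 3) * threeAPSum x + ε ^ 3 * Fintype.card R ^ 2
      ≤ threeAPSum (fun i => x i + ε * (1 - x i)) := by
  calc (1 - ε ^ 3) * threeAPSum x + ε ^ 3 * Fintype.card R ^ 2
      = ∑ i, ∑ j, ((1 - ε ^ 3) * (x i * x (i + j) * x (i + 2 * j)) + ε ^ 3) := by
        simp only [threeAPSum, Finset.mul_sum, Finset.sum_add_distrib, Finset.sum_const,
          Finset.card_univ, nsmul_eq_mul, add_right_inj]
        ring
    _ ≤ _ := Finset.sum_le_sum fun i _ => Finset.sum_le_sum fun j _ =>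
        one_sub_pow_three_mul_add_le_lerp_mul (hx i) (hx _) (hx _) hε

lemma le_threeAPSum_lerp {x : R → ℝ} (hx : ∀ i, x i ∈ Icc 0 1) {s t δ : ℝ}
    (hs : s ∈ Icc 0 1) (hsδ : δ ≤ s ^ 3 * (1 - t + δ))
    (hxt : (t - δ) * Fintype.card R ^ 2 ≤ threeAPSum x) :
    t * Fintype.card R ^ 2 ≤ threeAPSum (fun i => x i + s * (1 - x i)) := by
  have h := threeAPSum_lerp_ge hx hs
  have hs3 : s ^ 3 ≤ 1 := pow_le_one₀ hs.1 hs.2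
  have := mul_le_mul_of_nonneg_left hxt (sub_nonneg.2 hs3)
  nlinarith [sq_nonneg (Fintype.card R : ℝ)]

end threeAPSum

theorem stmt_17_general (n : ℕ) [NeZero n]
    (p : ℝ) (hp : p ∈ Set.Ioo (0:ℝ) 1)
    (f : (ZMod n → ℝ) → ℝ)
    (hf : ∀ x, f x = (1 / (n : ℝ)) * ∑ i : ZMod n, ∑ j : ZMod n,
        x i * x (i + j) * x (i + 2 * j))
    (Ip : (ZMod n → ℝ) → ℝ)
    (hIp : ∀ x, Ip x = ∑ i : ZMod n,
        (x i * Real.log (x i / p) + (1 - x i) * Real.log ((1 - x i) / (1 - p))))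
    (φ : ℝ → ℝ)
    (hφ : ∀ t, φ t = sInf (Ip '' {x : ZMod n → ℝ |
        (∀ i, x i ∈ Set.Icc (0:ℝ) 1) ∧ f x ≥ t * n}))
    (t δ : ℝ) (hδ : 0 < δ) (ht : t < 1) :
    φ (t - δ) ≥ φ t - (δ / (1 - t)) ^ ((1 : ℝ) / 3) * n * Real.log (1 / p) := by
  have hcard : (Fintype.card (ZMod n) : ℝ) = n := by rw [ZMod.card]
  have hIp' : ∀ x, Ip x = ∑ i, bernoulliKL p (x i) := hIp
  have hf_ge : ∀ x u, f x ≥ u * n ↔ u * Fintype.card (ZMod n) ^ 2 ≤ threeAPSum x := by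
    intro x u
    rw [hf, hcard, ge_iff_le, one_div_mul_eq_div, le_div_iff₀ (Nat.cast_pos.2 (NeZero.pos n)),
      mul_assoc, ← sq]
    rfl
  have hbase : 0 ≤ δ / (1 - t) := div_nonneg hδ.le (sub_pos.2 ht).le
  have hε3 : ((δ / (1 - t)) ^ ((1 : ℝ) / 3)) ^ 3 = δ / (1 - t) := by
    rw [show (1 : ℝ) / 3 = ((3 : ℕ) : ℝ)⁻¹ by norm_num]
    exact rpow_inv_natCast_pow hbase three_ne_zero
  set s := min ((δ / (1 - t)) ^ ((1 : ℝ) / 3)) 1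
  have hs : s ∈ Icc 0 1 := ⟨le_min (rpow_nonneg hbase _) zero_le_one, min_le_right _ _⟩
  have hlog : 0 ≤ log (1 / p) := log_nonneg (one_le_one_div hp.1 hp.2.le)
  rw [hφ, hφ, ge_iff_le, sub_le_iff_le_add]
  refine sInf_image_le_sInf_image_add
    ⟨fun _ => 1, fun _ => ⟨zero_le_one, le_rfl⟩, ?_⟩ ⟨0, ?_⟩ ?_
  · rw [hf_ge, threeAPSum_one]
    nlinarith [sq_nonneg (Fintype.card (ZMod n) : ℝ)]
  · rintro _ ⟨z, ⟨hz, -⟩, rfl⟩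
    rw [hIp']
    exact Finset.sum_nonneg fun i _ => bernoulliKL_nonneg hp (hz i)
  rintro x ⟨hx, hxt⟩
  refine ⟨fun i => x i + s * (1 - x i), ⟨fun i => lerp_mem_Icc (hx i) hs, ?_⟩, ?_⟩
  · exact (hf_ge _ _).2
      (le_threeAPSum_lerp hx hs (le_min_pow_three_mul ht hε3) ((hf_ge _ _).1 hxt))
  · rw [hIp', hIp']
    grw [sum_bernoulliKL_lerp_le hp hx hs, hcard, show s ≤ _ from min_le_left _ _]

theorem stmt_17 (n : ℕ) [NeZero n]
    (p : ℝ) (hp : p ∈ Set.Ioo (0:ℝ) 1)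
    (f : (ZMod n → ℝ) → ℝ)
    (hf : ∀ x, f x = (1 / (n : ℝ)) * ∑ i : ZMod n, ∑ j : ZMod n,
        x i * x (i + j) * x (i + 2 * j))
    (Ip : (ZMod n → ℝ) → ℝ)
    (hIp : ∀ x, Ip x = ∑ i : ZMod n,
        (x i * Real.log (x i / p) + (1 - x i) * Real.log ((1 - x i) / (1 - p))))
    (φ : ℝ → ℝ)
    (hφ : ∀ t, φ t = sInf (Ip '' {x : ZMod n → ℝ |
        (∀ i, x i ∈ Set.Icc (0:ℝ) 1) ∧ f x ≥ t * n}))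
    (t δ : ℝ) (hδ : 0 < δ) (htδ : δ < t) (ht : t < 1) :
    φ (t - δ) ≥ φ t - (δ / (1 - t)) ^ ((1 : ℝ) / 3) * n * Real.log (1 / p) :=
  stmt_17_general n p hp f hf Ip hIp φ hφ t δ hδ ht
end
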